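/- Exponential maximal inequality for continuous martingales: Let (Ω, 𝓕, (𝓕_s)_{s∈[0,T]}, ℙ) be a filtered probability space, t ∈ [0,T], and let M = (M_s)_{s∈[t,T]} be a martingale with respect to (𝓕_s) with almost surely continuous paths, such that the random variable exp( sup_{s∈[t,T]} |M_s − M_t| ) is integrable. Then almost surely 𝔼[ exp( sup_{s∈[t,T]} |M_s − M_t| ) | 𝓕_t ] ≤ 10 · 𝔼[ exp( |M_T − M_t| ) | 𝓕_t ]. -/

import Mathlib

/-!
Centre the martingale at time `t`: `X s = M s - M t`. By conditional Jensen, `Y s = exp (|X s| / 2)`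
is a nonnegative submartingale with `Y s ^ 2 = exp |X s|`, so Doob's `L²` maximal inequality gives
`∫_A sup_s exp |X s| = ∫_A (sup_s Y s) ^ 2 ≤ 4 ∫_A exp |X T|` for every `A ∈ 𝓕 t`, and `4 ≤ 10`
passes to the conditional expectations. Doob's `L²` inequality is derived in discrete time from the
weak-type maximal inequality (layer cake and Cauchy–Schwarz) and carried over to `[t, T]` along
finite subsets of a countable dense set of times, where continuity of the paths recovers the
supremum over the whole interval.
-/

open MeasureTheory Set
open scoped ENNReal NNReal

theorem DenseRange.iSup_comp {α β γ : Type*} [TopologicalSpace β] [CompleteLinearOrder γ]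
    [TopologicalSpace γ] [OrderClosedTopology γ] {e : α → β} (he : DenseRange e) {h : β → γ}
    (hh : Continuous h) : ⨆ a, h (e a) = ⨆ b, h b :=
  le_antisymm (iSup_comp_le h e) <| iSup_le fun b =>
    he.induction_on b (isClosed_le hh continuous_const) fun a => le_iSup (h ∘ e) a

theorem convexOn_exp_abs_div_two : ConvexOn ℝ univ fun x : ℝ => Real.exp (|x| / 2) := by
  have habs : ConvexOn ℝ univ fun x : ℝ => |x| / 2 := by
    simpa [div_eq_inv_mul] using
      (convexOn_norm (E := ℝ) convex_univ).smul (by norm_num : (0 : ℝ) ≤ 1 / 2)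
  have himg : Convex ℝ ((fun x : ℝ => |x| / 2) '' univ) :=
    (isPreconnected_univ.image _ (by fun_prop)).convex
  exact (convexOn_exp.subset (subset_univ _) himg).comp habs (Real.exp_monotone.monotoneOn _)

theorem ENNReal.ofReal_exp_div_two_sq (x : ℝ) :
    ENNReal.ofReal (Real.exp (x / 2)) ^ 2 = ENNReal.ofReal (Real.exp x) := by
  rw [← ENNReal.ofReal_pow (Real.exp_pos _).le, Real.exp_half, Real.sq_sqrt (Real.exp_pos _).le]

theorem ENNReal.le_four_mul_of_le_two_mul_sqrt_mul_sqrt {a b : ℝ≥0∞} (ha : a ≠ ∞)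
    (h : a ≤ 2 * (b ^ (1 / 2 : ℝ) * a ^ (1 / 2 : ℝ))) : a ≤ 4 * b := by
  rcases eq_or_ne b ∞ with rfl | hb
  · simp
  lift a to ℝ≥0 using ha
  lift b to ℝ≥0 using hb
  rw [← ENNReal.coe_rpow_of_nonneg _ one_half_pos.le,
    ← ENNReal.coe_rpow_of_nonneg _ one_half_pos.le, ← NNReal.sqrt_eq_rpow,
    ← NNReal.sqrt_eq_rpow] at h
  norm_cast at h ⊢
  rw [← NNReal.coe_le_coe] at h ⊢
  push_cast at h ⊢
  have hsa := Real.mul_self_sqrt a.coe_nonneg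
  have hsb := Real.mul_self_sqrt b.coe_nonneg
  rcases (Real.sqrt_nonneg (a : ℝ)).eq_or_lt with ha0 | ha0
  · rw [← hsa, ← ha0, zero_mul]; positivity
  have hab : √(a : ℝ) ≤ 2 * √(b : ℝ) := le_of_mul_le_mul_right (by linarith) ha0
  nlinarith [Real.sqrt_nonneg (b : ℝ)]

theorem Finset.exists_monotone_nat_of_forall_le {ι : Type*} [LinearOrder ι] (F : Finset ι)
    {b : ι} (hb : ∀ s ∈ F, s ≤ b) :
    ∃ τ : ℕ → ι, Monotone τ ∧ τ F.card = b ∧ ∀ s ∈ F, ∃ k < F.card, τ k = s := by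
  let τ : ℕ → ι := fun k => if h : k < F.card then F.orderEmbOfFin rfl ⟨k, h⟩ else b
  refine ⟨τ, fun i j hij => ?_, dif_neg (lt_irrefl _), fun s hs => ?_⟩
  · simp only [τ]
    split_ifs with hi hj hj
    · exact (F.orderEmbOfFin rfl).monotone (Fin.mk_le_mk.2 hij)
    · exact hb _ (F.orderEmbOfFin_mem rfl _)
    · omega
    · exact le_rfl
  · rw [← Finset.mem_coe, ← F.range_orderEmbOfFin rfl] at hs
    obtain ⟨⟨k, hk⟩, rfl⟩ := hs
    exact ⟨k, hk, dif_pos hk⟩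

namespace MeasureTheory

variable {Ω : Type*} {m0 : MeasurableSpace Ω} {μ : Measure Ω}

section Filtration

variable {ι : Type*} [Preorder ι] {ℱ : Filtration ι m0}

def Filtration.comp {κ : Type*} [Preorder κ] (ℱ : Filtration ι m0) (τ : κ → ι)
    (hτ : Monotone τ) : Filtration κ m0 :=
  ⟨fun k => ℱ (τ k), fun _ _ h => ℱ.mono (hτ h), fun k => ℱ.le (τ k)⟩

theorem Submartingale.comp_monotone {κ : Type*} [Preorder κ] {f : ι → Ω → ℝ}
    (hf : Submartingale f ℱ μ) {τ : κ → ι} (hτ : Monotone τ) :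
    Submartingale (fun k => f (τ k)) (ℱ.comp τ hτ) μ :=
  ⟨fun k => hf.stronglyAdapted (τ k), fun _ _ hij => hf.ae_le_condExp (hτ hij),
    fun k => hf.integrable (τ k)⟩

variable [SigmaFiniteFiltration μ ℱ] {E : Type*} [NormedAddCommGroup E] [NormedSpace ℝ E]
  [CompleteSpace E]

theorem Martingale.restrict {f : ι → Ω → E} (hf : Martingale f ℱ μ) {A : Set Ω}
    (hA : ∀ i, MeasurableSet[ℱ i] A) : Martingale f ℱ (μ.restrict A) := by
  refine ⟨hf.stronglyAdapted, fun i j hij => ?_⟩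
  filter_upwards [condExp_restrict_ae_eq_restrict (ℱ.le i) (hA i) (hf.integrable j),
    ae_restrict_of_ae (hf.condExp_ae_eq hij)] with ω hω hfi
  rw [hω, hfi]

theorem Martingale.submartingale_convex_comp [FiniteDimensional ℝ E] {f : ι → Ω → E}
    (hf : Martingale f ℱ μ) {φ : E → ℝ} (hφ : ConvexOn ℝ univ φ)
    (hint : ∀ i, Integrable (φ ∘ f i) μ) : Submartingale (fun i => φ ∘ f i) ℱ μ := by
  have hφc : Continuous φ := continuousOn_univ.1 (hφ.continuousOn isOpen_univ)
  refine ⟨fun i => hφc.comp_stronglyMeasurable (hf.stronglyAdapted i), fun i j hij => ?_, hint⟩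
  filter_upwards [hf.condExp_ae_eq hij,
    hφ.map_condExp_le_of_finiteDimensional (ℱ.le i) (hf.integrable j) (hint j)] with ω hω hle
  simpa [hω] using hle

theorem martingale_Icc_sub_left {M : ι → Ω → E} {a b : ι} (hab : a ≤ b)
    (hadapt : ∀ s ∈ Icc a b, StronglyMeasurable[ℱ s] (M s))
    (hint : ∀ s ∈ Icc a b, Integrable (M s) μ)
    (hmart : ∀ s ∈ Icc a b, ∀ s' ∈ Icc a b, s ≤ s' → μ[M s'|ℱ s] =ᵐ[μ] M s) :
    Martingale (fun s : Icc a b => M s - M a) (ℱ.comp Subtype.val (Subtype.mono_coe _)) μ := by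
  have ha : a ∈ Icc a b := left_mem_Icc.2 hab
  have hMa : ∀ s : Icc a b, StronglyMeasurable[ℱ s] (M a) := fun s =>
    (hadapt a ha).mono (ℱ.mono s.2.1)
  refine ⟨fun s => (hadapt s s.2).sub (hMa s), fun s s' hss' => ?_⟩
  filter_upwards [condExp_sub (m := ℱ s) (hint s' s'.2) (hint a ha),
    hmart s s.2 s' s'.2 hss'] with ω hsub hs
  change μ[M s' - M a|ℱ s] ω = _
  rw [hsub, Pi.sub_apply, hs, condExp_of_stronglyMeasurable (ℱ.le s) (hMa s) (hint a ha),
    Pi.sub_apply]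

end Filtration

theorem condExp_mono_of_forall_setIntegral_le {m : MeasurableSpace Ω} (hm : m ≤ m0)
    [SigmaFinite (μ.trim hm)] {f g : Ω → ℝ} (hf : Integrable f μ) (hg : Integrable g μ)
    (hfg : ∀ s, MeasurableSet[m] s → ∫ ω in s, f ω ∂μ ≤ ∫ ω in s, g ω ∂μ) :
    μ[f|m] ≤ᵐ[μ] μ[g|m] := by
  refine ae_le_of_ae_le_trim (ae_le_of_forall_setIntegral_le
    (integrable_condExp.trim hm stronglyMeasurable_condExp)
    (integrable_condExp.trim hm stronglyMeasurable_condExp) fun s hs _ => ?_)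
  rw [← setIntegral_trim hm stronglyMeasurable_condExp hs,
    ← setIntegral_trim hm stronglyMeasurable_condExp hs, setIntegral_condExp hm hf hs,
    setIntegral_condExp hm hg hs]
  exact hfg s hs

/-- Layer cake for `X ^ 2` under `μ` and for `X` under `μ.withDensity Y`. -/
theorem lintegral_sq_le_two_mul_lintegral_mul_of_weak_type {X : Ω → ℝ} {Y : Ω → ℝ≥0∞}
    (hX : 0 ≤ X) (hXm : Measurable X) (hY : Measurable Y)
    (hweak : ∀ r > 0, ENNReal.ofReal r * μ {ω | r ≤ X ω} ≤ ∫⁻ ω in {ω | r ≤ X ω}, Y ω ∂μ) :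
    ∫⁻ ω, ENNReal.ofReal (X ω) ^ 2 ∂μ ≤ 2 * ∫⁻ ω, Y ω * ENNReal.ofReal (X ω) ∂μ := by
  calc ∫⁻ ω, ENNReal.ofReal (X ω) ^ 2 ∂μ
      = ∫⁻ ω, ENNReal.ofReal (X ω ^ (2 : ℝ)) ∂μ := by
        congr 1 with ω
        rw [Real.rpow_two, ENNReal.ofReal_pow (hX ω)]
    _ = 2 * ∫⁻ r in Ioi 0, μ {ω | r ≤ X ω} * ENNReal.ofReal r := by
        rw [lintegral_rpow_eq_lintegral_meas_le_mul μ (Filter.Eventually.of_forall hX)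
          hXm.aemeasurable two_pos]
        norm_num
    _ ≤ 2 * ∫⁻ r in Ioi 0, (μ.withDensity Y) {ω | r ≤ X ω} := by
        gcongr 1
        refine setLIntegral_mono' measurableSet_Ioi fun r hr => ?_
        rw [withDensity_apply _ (measurableSet_le measurable_const hXm), mul_comm]
        exact hweak r hr
    _ = 2 * ∫⁻ ω, ENNReal.ofReal (X ω) ∂μ.withDensity Y := by
        rw [lintegral_eq_lintegral_meas_le _ (Filter.Eventually.of_forall hX) hXm.aemeasurable]
    _ = 2 * ∫⁻ ω, Y ω * ENNReal.ofReal (X ω) ∂μ := by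
        rw [lintegral_withDensity_eq_lintegral_mul _ hY hXm.ennreal_ofReal]
        rfl

theorem lintegral_ofReal_sq_ne_top {f : Ω → ℝ} (hf : MemLp f 2 μ) (hf0 : 0 ≤ f) :
    ∫⁻ ω, ENNReal.ofReal (f ω) ^ 2 ∂μ ≠ ∞ := by
  simp_rw [← ENNReal.ofReal_pow (hf0 _)]
  exact hf.integrable_sq.lintegral_lt_top.ne

theorem integrable_exp_abs_of_integrable_exp_iSup_abs {ι : Type*} [TopologicalSpace ι]
    [CompactSpace ι] {f : ι → Ω → ℝ} (hf : ∀ i, AEStronglyMeasurable (f i) μ)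
    (hcont : ∀ᵐ ω ∂μ, Continuous fun i => f i ω)
    (hSint : Integrable (fun ω => Real.exp (⨆ i, |f i ω|)) μ) (i : ι) :
    Integrable (fun ω => Real.exp |f i ω|) μ :=
  hSint.mono' ((by fun_prop : Continuous fun x : ℝ => Real.exp |x|).comp_aestronglyMeasurable
    (hf i)) <| hcont.mono fun ω h => by
      rw [Real.norm_of_nonneg (Real.exp_pos _).le]
      exact Real.exp_le_exp.2 (le_ciSup (isCompact_range h.abs).bddAbove i)

variable [IsFiniteMeasure μ]

theorem Submartingale.lintegral_sup'_sq_le {ℱ : Filtration ℕ m0} {f : ℕ → Ω → ℝ}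
    (hsub : Submartingale f ℱ μ) (hnonneg : 0 ≤ f) (hL2 : ∀ k, MemLp (f k) 2 μ) (n : ℕ) :
    ∫⁻ ω, ENNReal.ofReal ((Finset.range (n + 1)).sup' Finset.nonempty_range_add_one
      fun k => f k ω) ^ 2 ∂μ ≤ 4 * ∫⁻ ω, ENNReal.ofReal (f n ω) ^ 2 ∂μ := by
  set X : Ω → ℝ := fun ω => (Finset.range (n + 1)).sup' Finset.nonempty_range_add_one
    fun k => f k ω
  have hfm : ∀ k, Measurable (f k) := fun k =>
    ((hsub.stronglyAdapted k).mono (ℱ.le k)).measurable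
  have hXm : Measurable X := Finset.measurable_range_sup'' fun k _ => hfm k
  have hX : 0 ≤ X := fun ω =>
    (hnonneg n ω).trans (Finset.le_sup' (fun k => f k ω) (Finset.self_mem_range_succ n))
  have hweak : ∀ r > 0, ENNReal.ofReal r * μ {ω | r ≤ X ω} ≤
      ∫⁻ ω in {ω | r ≤ X ω}, ENNReal.ofReal (f n ω) ∂μ := by
    intro r hr
    have h := maximal_ineq hsub hnonneg (ε := r.toNNReal) n
    rwa [Real.coe_toNNReal _ hr.le, ofReal_integral_eq_lintegral_ofReal
      (hsub.integrable n).integrableOn (Filter.Eventually.of_forall (hnonneg n))] at h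
  -- needed to cancel `√I` in `I ≤ 2 √J √I`, the output of the weak-type bound and Cauchy–Schwarz
  have hXfin : ∫⁻ ω, ENNReal.ofReal (X ω) ^ 2 ∂μ ≠ ∞ := by
    refine ne_top_of_le_ne_top (ENNReal.sum_ne_top.2 fun k (_ : k ∈ Finset.range (n + 1)) =>
      lintegral_ofReal_sq_ne_top (hL2 k) (hnonneg k)) ?_
    rw [← lintegral_finsetSum _ fun k _ => (hfm k).ennreal_ofReal.pow_const 2]
    refine lintegral_mono fun ω => ?_
    obtain ⟨k, hk, hXk⟩ : ∃ k ∈ Finset.range (n + 1), X ω = f k ω :=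
      Finset.exists_mem_eq_sup' _ _
    rw [hXk]
    exact Finset.single_le_sum (f := fun k => ENNReal.ofReal (f k ω) ^ 2) (fun _ _ => zero_le) hk
  have hCS := ENNReal.lintegral_mul_le_Lp_mul_Lq μ Real.HolderConjugate.two_two
    (hfm n).ennreal_ofReal.aemeasurable hXm.ennreal_ofReal.aemeasurable
  simp only [ENNReal.rpow_two, Pi.mul_apply] at hCS
  exact ENNReal.le_four_mul_of_le_two_mul_sqrt_mul_sqrt hXfin
    ((lintegral_sq_le_two_mul_lintegral_mul_of_weak_type hX hXm (hfm n).ennreal_ofReal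
      hweak).trans (by gcongr))

variable {ι : Type*} [LinearOrder ι] {ℱ : Filtration ι m0} {f : ι → Ω → ℝ}

theorem Submartingale.lintegral_iSup_finset_sq_le (hsub : Submartingale f ℱ μ)
    (hnonneg : 0 ≤ f) (hL2 : ∀ i, MemLp (f i) 2 μ) (F : Finset ι) {b : ι}
    (hb : ∀ s ∈ F, s ≤ b) :
    ∫⁻ ω, ⨆ s ∈ F, ENNReal.ofReal (f s ω) ^ 2 ∂μ ≤ 4 * ∫⁻ ω, ENNReal.ofReal (f b ω) ^ 2 ∂μ := by
  obtain ⟨τ, hτ, hτb, hτF⟩ := F.exists_monotone_nat_of_forall_le hb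
  have hdoob := (hsub.comp_monotone hτ).lintegral_sup'_sq_le (fun k => hnonneg (τ k))
    (fun k => hL2 (τ k)) F.card
  rw [hτb] at hdoob
  refine le_trans (lintegral_mono fun ω => iSup₂_le fun s hs => ?_) hdoob
  obtain ⟨k, hk, rfl⟩ := hτF s hs
  gcongr
  exact Finset.le_sup' (fun k => f (τ k) ω) (Finset.mem_range.2 (by omega))

theorem Submartingale.lintegral_iSup_sq_le (hsub : Submartingale f ℱ μ) (hnonneg : 0 ≤ f)
    (hL2 : ∀ i, MemLp (f i) 2 μ) {κ : Type*} [Countable κ] (e : κ → ι) {b : ι}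
    (hb : ∀ k, e k ≤ b) :
    ∫⁻ ω, ⨆ k, ENNReal.ofReal (f (e k) ω) ^ 2 ∂μ ≤ 4 * ∫⁻ ω, ENNReal.ofReal (f b ω) ^ 2 ∂μ := by
  have hfm : ∀ i, Measurable (f i) := fun i =>
    ((hsub.stronglyAdapted i).mono (ℱ.le i)).measurable
  simp_rw [iSup_eq_iSup_finset fun k => ENNReal.ofReal (f (e k) _) ^ 2]
  rw [lintegral_iSup_directed (fun F => ?_) (Monotone.directed_le fun F G hFG => ?_)]
  · refine iSup_le fun F => le_trans (lintegral_mono fun ω => ?_)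
      (hsub.lintegral_iSup_finset_sq_le hnonneg hL2 (F.image e) (by simpa using fun k _ => hb k))
    exact iSup₂_le fun k hk => le_iSup₂_of_le (e k) (Finset.mem_image_of_mem e hk) le_rfl
  · exact (Measurable.iSup fun k => Measurable.iSup fun _ =>
      (hfm _).ennreal_ofReal.pow_const 2).aemeasurable
  · exact fun ω => biSup_mono fun k hk => hFG hk

theorem Martingale.lintegral_iSup_exp_abs_le [TopologicalSpace ι]
    [TopologicalSpace.SeparableSpace ι] (hX : Martingale f ℱ μ)
    (hcont : ∀ᵐ ω ∂μ, Continuous fun i => f i ω)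
    (hint : ∀ i, Integrable (fun ω => Real.exp |f i ω|) μ) {b : ι} (hb : ∀ i, i ≤ b) :
    ∫⁻ ω, ⨆ i, ENNReal.ofReal (Real.exp |f i ω|) ∂μ ≤
      4 * ∫⁻ ω, ENNReal.ofReal (Real.exp |f b ω|) ∂μ := by
  set φ : ℝ → ℝ := fun x => Real.exp (|x| / 2)
  have hφm : ∀ i, AEStronglyMeasurable (φ ∘ f i) μ := fun i =>
    (by fun_prop : Continuous φ).comp_aestronglyMeasurable (hX.integrable i).1
  have hφ_int : ∀ i, Integrable (φ ∘ f i) μ := fun i =>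
    (hint i).mono' (hφm i) (Filter.Eventually.of_forall fun ω => by
      simp only [Function.comp, φ, Real.norm_eq_abs, abs_of_pos (Real.exp_pos _)]
      exact Real.exp_le_exp.2 (by linarith [abs_nonneg (f i ω)]))
  have hY := hX.submartingale_convex_comp convexOn_exp_abs_div_two hφ_int
  have hL2 : ∀ i, MemLp (φ ∘ f i) 2 μ := fun i =>
    (memLp_two_iff_integrable_sq (hφm i)).2 (by
      simpa [φ, Real.exp_half, Real.sq_sqrt (Real.exp_pos _).le] using hint i)
  obtain ⟨D, hDc, hDd⟩ := TopologicalSpace.exists_countable_dense ι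
  have := hDc.to_subtype
  calc ∫⁻ ω, ⨆ i, ENNReal.ofReal (Real.exp |f i ω|) ∂μ
      = ∫⁻ ω, ⨆ i : D, ENNReal.ofReal (φ (f i ω)) ^ 2 ∂μ := by
        refine lintegral_congr_ae (hcont.mono fun ω hω => ?_)
        simp only [φ, ENNReal.ofReal_exp_div_two_sq]
        exact (hDd.denseRange_val.iSup_comp
          (ENNReal.continuous_ofReal.comp (by fun_prop))).symm
    _ ≤ 4 * ∫⁻ ω, ENNReal.ofReal (φ (f b ω)) ^ 2 ∂μ :=
        hY.lintegral_iSup_sq_le (fun i ω => (Real.exp_pos _).le) hL2 Subtype.val fun i => hb i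
    _ = 4 * ∫⁻ ω, ENNReal.ofReal (Real.exp |f b ω|) ∂μ := by
        simp only [φ, ENNReal.ofReal_exp_div_two_sq]

theorem Martingale.integral_exp_iSup_abs_le [TopologicalSpace ι] [CompactSpace ι]
    [TopologicalSpace.SeparableSpace ι] (hX : Martingale f ℱ μ)
    (hcont : ∀ᵐ ω ∂μ, Continuous fun i => f i ω)
    (hSint : Integrable (fun ω => Real.exp (⨆ i, |f i ω|)) μ) {b : ι} (hb : ∀ i, i ≤ b) :
    ∫ ω, Real.exp (⨆ i, |f i ω|) ∂μ ≤ 4 * ∫ ω, Real.exp |f b ω| ∂μ := by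
  have : Nonempty ι := ⟨b⟩
  have hint := integrable_exp_abs_of_integrable_exp_iSup_abs (fun i => (hX.integrable i).1)
    hcont hSint
  have hS_eq : ∀ᵐ ω ∂μ, ENNReal.ofReal (Real.exp (⨆ i, |f i ω|)) =
      ⨆ i, ENNReal.ofReal (Real.exp |f i ω|) := hcont.mono fun ω h =>
    Monotone.map_ciSup_of_continuousAt
      (ENNReal.continuous_ofReal.comp Real.continuous_exp).continuousAt
      (ENNReal.ofReal_mono.comp Real.exp_monotone) (isCompact_range h.abs).bddAbove
  have hdoob := hX.lintegral_iSup_exp_abs_le hcont hint hb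
  rwa [← lintegral_congr_ae hS_eq, ← ofReal_integral_eq_lintegral_ofReal hSint
      (ae_of_all _ fun _ => (Real.exp_pos _).le),
    ← ofReal_integral_eq_lintegral_ofReal (hint b) (ae_of_all _ fun _ => (Real.exp_pos _).le),
    ← ENNReal.ofReal_ofNat 4, ← ENNReal.ofReal_mul (by norm_num),
    ENNReal.ofReal_le_ofReal_iff (by positivity)] at hdoob

end MeasureTheory

/-- Exponential maximal inequality for continuous martingales:
If `M` is a continuous martingale on `[t,T]` with
`exp(sup_{s∈[t,T]} |M_s − M_t|)` integrable, then a.s.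
`𝔼[exp(sup_{s∈[t,T]} |M_s − M_t|) | 𝓕 t] ≤ 10 · 𝔼[exp(|M_T − M_t|) | 𝓕 t]`. -/
theorem exponential_maximal_inequality
    {Ω : Type*} {m0 : MeasurableSpace Ω} (μ : Measure Ω) [IsProbabilityMeasure μ]
    (𝓕 : Filtration ℝ m0) (T t : ℝ) (ht : t ∈ Icc (0:ℝ) T)
    (M : ℝ → Ω → ℝ)
    (hadapt : ∀ s ∈ Icc t T, StronglyMeasurable[𝓕 s] (M s))
    (hint : ∀ s ∈ Icc t T, Integrable (M s) μ)
    (hmart : ∀ s ∈ Icc t T, ∀ s' ∈ Icc t T, s ≤ s' → μ[M s'|𝓕 s] =ᵐ[μ] M s)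
    (hcont : ∀ᵐ ω ∂μ, ContinuousOn (fun s => M s ω) (Icc t T))
    (S : Ω → ℝ) (hS : ∀ ω, S ω = ⨆ s : Icc t T, |M (s : ℝ) ω - M t ω|)
    (hexpint : Integrable (fun ω => Real.exp (S ω)) μ) :
    ∀ᵐ ω ∂μ, (μ[fun ω' => Real.exp (S ω')|𝓕 t]) ω ≤
      10 * (μ[fun ω' => Real.exp (abs (M T ω' - M t ω'))|𝓕 t]) ω := by
  obtain rfl : S = _ := funext hS
  have hX := martingale_Icc_sub_left ht.2 hadapt hint hmart
  have hpath : ∀ᵐ ω ∂μ, Continuous fun s : Icc t T => M s ω - M t ω :=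
    hcont.mono fun ω h => (continuousOn_iff_continuous_domRestrict.1 h).sub continuous_const
  have hT : T ∈ Icc t T := right_mem_Icc.2 ht.2
  have hgint : Integrable (fun ω => Real.exp |M T ω - M t ω|) μ :=
    integrable_exp_abs_of_integrable_exp_iSup_abs (fun s => (hX.integrable s).1) hpath hexpint
      ⟨T, hT⟩
  have key : ∀ A, MeasurableSet[𝓕 t] A → ∫ ω in A, Real.exp (⨆ s : Icc t T, |M s ω - M t ω|) ∂μ ≤
      ∫ ω in A, ((10 : ℝ) • fun ω' => Real.exp |M T ω' - M t ω'|) ω ∂μ := fun A hA =>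
    calc _ ≤ 4 * ∫ ω in A, Real.exp |M T ω - M t ω| ∂μ :=
          (hX.restrict fun s => 𝓕.mono s.2.1 A hA).integral_exp_iSup_abs_le
            (ae_restrict_of_ae hpath) hexpint.restrict (b := ⟨T, hT⟩) fun s => s.2.2
      _ ≤ 10 * ∫ ω in A, Real.exp |M T ω - M t ω| ∂μ := by gcongr; norm_num
      _ = _ := by rw [← integral_const_mul]; rfl
  filter_upwards [condExp_mono_of_forall_setIntegral_le (𝓕.le t) hexpint (hgint.smul (10 : ℝ)) key,
    condExp_smul (10 : ℝ) (fun ω' => Real.exp |M T ω' - M t ω'|) (𝓕 t)] with ω hle hsmul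
  rwa [hsmul] at hle
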